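/- Let M₁, M₂ be manifolds equipped with Jacobi brackets {·,·}₁, {·,·}₂, and let a Lie group G act on M₁ by Jacobi maps with smooth quotient π: M₁ → M₁/G a surjective submersion. Then the formula {f,h}_red ∘ π = {f∘π, h∘π}₁ well-defines a bilinear, skew-symmetric bracket {·,·}_red on C^∞(M₁/G) satisfying the Jacobi identity, and π is a Jacobi map. -/
import Mathlib


/-- Jacobi reduction theorem by a Lie group action (algebraic form): if a group G
acts on M₁ by Jacobi maps for a Jacobi bracket b on functions on M₁ (bilinear,
skew-symmetric, satisfying the Jacobi identity), and π : M₁ → Q is a surjection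
whose fibres are exactly the G-orbits (the quotient M₁/G), then there is a unique
bracket b_red on functions on Q such that π is a Jacobi map, i.e.
(b_red f k) ∘ π = b (f∘π) (k∘π); moreover any such b_red is bilinear,
skew-symmetric and satisfies the Jacobi identity. -/
theorem jacobi_reduction
    (M₁ Q : Type*) (G : Type*) [Group G] [MulAction G M₁]
    (b : (M₁ → ℝ) → (M₁ → ℝ) → (M₁ → ℝ))
    (hadd : ∀ f f' k, b (f + f') k = b f k + b f' k)
    (hsmul : ∀ (a : ℝ) f k, b (a • f) k = a • b f k)
    (hskew : ∀ f k, b f k = -b k f)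
    (hjac : ∀ f k j, b f (b k j) + b k (b j f) + b j (b f k) = 0)
    (hJacobiAction : ∀ (g₀ : G) (f k : M₁ → ℝ),
      b (fun x => f (g₀ • x)) (fun x => k (g₀ • x)) = fun x => b f k (g₀ • x))
    (π : M₁ → Q) (hsurj : Function.Surjective π)
    (horbit : ∀ x y : M₁, π x = π y ↔ ∃ g₀ : G, g₀ • x = y) :
    (∃! bred : (Q → ℝ) → (Q → ℝ) → (Q → ℝ),
      ∀ f k : Q → ℝ, (bred f k) ∘ π = b (f ∘ π) (k ∘ π)) ∧
    (∀ bred : (Q → ℝ) → (Q → ℝ) → (Q → ℝ),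
      (∀ f k : Q → ℝ, (bred f k) ∘ π = b (f ∘ π) (k ∘ π)) →
      (∀ f f' k, bred (f + f') k = bred f k + bred f' k) ∧
      (∀ (a : ℝ) f k, bred (a • f) k = a • bred f k) ∧
      (∀ f k, bred f k = -bred k f) ∧
      (∀ f k j, bred f (bred k j) + bred k (bred j f) + bred j (bred f k) = 0)) := by
  -- π is injective on functions: u ∘ π determines u
  have hπinj : ∀ u v : Q → ℝ, u ∘ π = v ∘ π → u = v := by
    intro u v h
    funext q
    obtain ⟨x, rfl⟩ := hsurj q
    exact congrFun h x
  -- b of π-pullbacks is G-invariant, hence constant on fibres of π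
  have hconst : ∀ (f k : Q → ℝ) (x y : M₁), π x = π y →
      b (f ∘ π) (k ∘ π) x = b (f ∘ π) (k ∘ π) y := by
    intro f k x y hxy
    obtain ⟨g₀, rfl⟩ := (horbit x y).mp hxy
    have h1 : (fun z => (f ∘ π) (g₀ • z)) = f ∘ π := by
      funext z
      simp only [Function.comp_apply]
      congr 1
      exact ((horbit z (g₀ • z)).mpr ⟨g₀, rfl⟩).symm
    have h2 : (fun z => (k ∘ π) (g₀ • z)) = k ∘ π := by
      funext z
      simp only [Function.comp_apply]
      congr 1
      exact ((horbit z (g₀ • z)).mpr ⟨g₀, rfl⟩).symm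
    have := hJacobiAction g₀ (f ∘ π) (k ∘ π)
    rw [h1, h2] at this
    exact congrFun this x
  -- construct bred via a section of π
  set s : Q → M₁ := Function.surjInv hsurj with hs
  have hsec : ∀ q, π (s q) = q := fun q => Function.surjInv_eq hsurj q
  set bred₀ : (Q → ℝ) → (Q → ℝ) → (Q → ℝ) :=
    fun f k q => b (f ∘ π) (k ∘ π) (s q) with hbred₀
  have hkey : ∀ f k : Q → ℝ, (bred₀ f k) ∘ π = b (f ∘ π) (k ∘ π) := by
    intro f k
    funext x
    exact hconst f k (s (π x)) x (hsec (π x))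
  constructor
  · refine ⟨bred₀, hkey, ?_⟩
    intro c hc
    funext f k
    apply hπinj
    rw [hc f k, hkey f k]
  · intro bred hbr
    have hcomp : ∀ f k (x : M₁), bred f k (π x) = b (f ∘ π) (k ∘ π) x :=
      fun f k x => congrFun (hbr f k) x
    refine ⟨?_, ?_, ?_, ?_⟩
    · intro f f' k
      apply hπinj
      funext x
      simp only [Function.comp_apply, Pi.add_apply]
      rw [hcomp, hcomp, hcomp]
      have : (f + f') ∘ π = f ∘ π + f' ∘ π := rfl
      rw [this, hadd]
      rfl
    · intro a f k
      apply hπinj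
      funext x
      simp only [Function.comp_apply, Pi.smul_apply]
      rw [hcomp, hcomp]
      have : (a • f) ∘ π = a • (f ∘ π) := rfl
      rw [this, hsmul]
      rfl
    · intro f k
      apply hπinj
      funext x
      simp only [Function.comp_apply, Pi.neg_apply]
      rw [hcomp, hcomp, hskew]
      rfl
    · intro f k j
      apply hπinj
      funext x
      simp only [Function.comp_apply, Pi.add_apply, Pi.zero_apply]
      rw [hcomp, hcomp, hcomp]
      rw [show (bred k j) ∘ π = b (k ∘ π) (j ∘ π) from hbr k j,
          show (bred j f) ∘ π = b (j ∘ π) (f ∘ π) from hbr j f,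
          show (bred f k) ∘ π = b (f ∘ π) (k ∘ π) from hbr f k]
      exact congrFun (hjac (f ∘ π) (k ∘ π) (j ∘ π)) x
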